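/- arXiv:2511.21279 — 2 statements merged into one kernel-verified Lean document; each statement's English description precedes it below -/
import Mathlib

section
/- Let G be a group with an automorphism σ of order 2, acting on a set X that carries a map σ: X → X with σ(σ(x)) = x for all x ∈ X, such that σ(g)·σ(x) = σ(g·x) for all g ∈ G, x ∈ X. Let x₀ ∈ X satisfy σ(x₀) = x₀, let Z_G(x₀) be its stabilizer, let Y = G·x₀ and Y^σ = {y ∈ Y : σ(y) = y}. Assume H¹(G,σ) is trivial, i.e. every cocycle in G has the form h⁻¹σ(h) for some h ∈ G. Then the G^σ-orbits in Y^σ are in bijection with H¹(Z_G(x₀),σ): a class [c] ∈ H¹(Z_G(x₀),σ) corresponds to the G^σ-orbit of g·x₀, where g ∈ G is any element with g⁻¹σ(g) = c. -/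
/-- `g` is a cocycle for the involution `σ`. -/
def IsCocycle {G : Type*} [Group G] (σ : G →* G) (g : G) : Prop := g * σ g = 1

/-- Cocycles of a subgroup `Z`, with equivalence taken inside `Z`. -/
def relH1Setoid {G : Type*} [Group G] (σ : G →* G) (Z : Subgroup G) :
    Setoid {g : G // g ∈ Z ∧ IsCocycle σ g} where
  r a b := ∃ h ∈ Z, (b : G) = h * (a : G) * (σ h)⁻¹
  iseqv := by
    refine ⟨fun a => ⟨1, Z.one_mem, by simp⟩, ?_, ?_⟩
    · rintro a b ⟨h, hZ, e⟩
      exact ⟨h⁻¹, Z.inv_mem hZ, by rw [e, map_inv, inv_inv]; group⟩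
    · rintro a b c ⟨h, hZ, e⟩ ⟨k, kZ, f⟩
      exact ⟨k * h, Z.mul_mem kZ hZ, by rw [f, e, map_mul, mul_inv_rev]; group⟩

/-- The first Galois cohomology set `H¹(Z,σ)` of a subgroup `Z ⊆ G`. -/
def relH1 {G : Type*} [Group G] (σ : G →* G) (Z : Subgroup G) := Quotient (relH1Setoid σ Z)

/-- The class of a cocycle of `Z` in `H¹(Z,σ)`. -/
def relH1.mk {G : Type*} [Group G] (σ : G →* G) (Z : Subgroup G)
    (a : {g : G // g ∈ Z ∧ IsCocycle σ g}) : relH1 σ Z :=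
  Quotient.mk (relH1Setoid σ Z) a

/-- The set of fixed points of `σX` in the orbit of `x₀`, up to the action of `G^σ`. -/
def fixedOrbitSetoid {G X : Type*} [Group G] [MulAction G X] (σG : G →* G) (σX : X → X)
    (x₀ : X) : Setoid {y : X // (∃ g : G, g • x₀ = y) ∧ σX y = y} where
  r y y' := ∃ g : G, σG g = g ∧ g • (y : X) = (y' : X)
  iseqv := by
    refine ⟨fun y => ⟨1, map_one σG, one_smul G _⟩, ?_, ?_⟩
    · rintro y y' ⟨g, hg, e⟩
      refine ⟨g⁻¹, by rw [map_inv, hg], ?_⟩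
      rw [← e, inv_smul_smul]
    · rintro x y z ⟨g, hg, e⟩ ⟨k, hk, f⟩
      exact ⟨k * g, by rw [map_mul, hg, hk], by rw [mul_smul, e, f]⟩

section Aux
variable {G X : Type*} [Group G] [MulAction G X]

lemma coc_aux (σG : G →* G) (hσG : ∀ g, σG (σG g) = g) (g : G) :
    IsCocycle σG (g⁻¹ * σG g) := by
  unfold IsCocycle
  simp only [map_mul, map_inv, hσG]
  group

lemma sigma_fix_aux (σG : G →* G) (g h c : G)
    (e1 : g⁻¹ * σG g = c) (e2 : h⁻¹ * σG h = c) : σG (g * h⁻¹) = g * h⁻¹ := by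
  have hg : σG g = g * c := by rw [← e1]; group
  have hh : σG h = h * c := by rw [← e2]; group
  rw [map_mul, map_inv, hg, hh]
  group

lemma rel_aux (σG : G →* G) (x₀ : X) (g g' k : G) (hk : σG k = k)
    (he : g' • x₀ = (k * g) • x₀) :
    ∃ h ∈ MulAction.stabilizer G x₀,
      g'⁻¹ * σG g' = h * (g⁻¹ * σG g) * (σG h)⁻¹ := by
  refine ⟨g'⁻¹ * k * g, ?_, ?_⟩
  · show (g'⁻¹ * k * g) • x₀ = x₀
    rw [mul_smul, mul_smul, ← mul_smul k g, ← he, ← mul_smul, inv_mul_cancel, one_smul]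
  · simp only [map_mul, map_inv, hk]
    group

end Aux
/-- If `H¹(G,σ)` is trivial, the `G^σ`-orbits in `Y^σ` (`Y = G·x₀`) are in bijection with
`H¹(Z_G(x₀),σ)`: the class of a cocycle `c` corresponds to the `G^σ`-orbit of `g·x₀`,
where `g ∈ G` is any element with `g⁻¹σ(g) = c`. -/
theorem statement1 {G X : Type*} [Group G] [MulAction G X]
    (σG : G →* G) (hσG : ∀ g, σG (σG g) = g)
    (σX : X → X) (hσX : ∀ x, σX (σX x) = x)
    (hcompat : ∀ (g : G) (x : X), σG g • σX x = σX (g • x))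
    (x₀ : X) (hx₀ : σX x₀ = x₀)
    (htriv : ∀ g : G, IsCocycle σG g → ∃ h : G, g = h⁻¹ * σG h) :
    ∃ F : relH1 σG (MulAction.stabilizer G x₀) ≃ Quotient (fixedOrbitSetoid σG σX x₀),
      ∀ (a : {g : G // g ∈ MulAction.stabilizer G x₀ ∧ IsCocycle σG g})
        (g : G), g⁻¹ * σG g = (a : G) →
        ∀ y : {y : X // (∃ g' : G, g' • x₀ = y) ∧ σX y = y}, (y : X) = g • x₀ →
          F (relH1.mk σG (MulAction.stabilizer G x₀) a) =
            Quotient.mk (fixedOrbitSetoid σG σX x₀) y := by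
  classical
  -- key fact: σX (g • x₀) = σG g • x₀
  have hfix : ∀ g : G, σX (g • x₀) = σG g • x₀ := fun g => by
    rw [← hcompat g x₀, hx₀]
  -- forward map on representatives
  have fwdspec : ∀ a : {g : G // g ∈ MulAction.stabilizer G x₀ ∧ IsCocycle σG g},
      ∃ h : G, (a : G) = h⁻¹ * σG h := fun a => htriv a a.2.2
  let f : {g : G // g ∈ MulAction.stabilizer G x₀ ∧ IsCocycle σG g} →
      {y : X // (∃ g' : G, g' • x₀ = y) ∧ σX y = y} := fun a =>
    ⟨(fwdspec a).choose • x₀, ⟨_, rfl⟩, by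
      have hm : ((a : G)) • x₀ = x₀ := a.2.1
      rw [(fwdspec a).choose_spec, mul_smul] at hm
      rw [hfix]
      calc σG (fwdspec a).choose • x₀
          = (fwdspec a).choose • ((fwdspec a).choose⁻¹ • σG (fwdspec a).choose • x₀) := by
            rw [smul_inv_smul]
        _ = (fwdspec a).choose • x₀ := by rw [hm]⟩
  have hf1 : ∀ a, ((f a : X)) = (fwdspec a).choose • x₀ := fun a => rfl
  -- backward map on representatives
  let finv : {y : X // (∃ g' : G, g' • x₀ = y) ∧ σX y = y} →
      {g : G // g ∈ MulAction.stabilizer G x₀ ∧ IsCocycle σG g} := fun y =>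
    ⟨(y.2.1.choose)⁻¹ * σG y.2.1.choose, by
      have hg : y.2.1.choose • x₀ = (y : X) := y.2.1.choose_spec
      have : σG y.2.1.choose • x₀ = y.2.1.choose • x₀ := by
        rw [← hfix, hg, y.2.2]
      show ((y.2.1.choose)⁻¹ * σG y.2.1.choose) • x₀ = x₀
      rw [mul_smul, this, inv_smul_smul], coc_aux σG hσG _⟩
  have hfinv1 : ∀ y, ((finv y : G)) = (y.2.1.choose)⁻¹ * σG y.2.1.choose := fun y => rfl
  -- the lifted maps
  refine ⟨⟨Quotient.lift (fun a => Quotient.mk (fixedOrbitSetoid σG σX x₀) (f a)) ?_,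
      Quotient.lift (fun y => Quotient.mk (relH1Setoid σG (MulAction.stabilizer G x₀)) (finv y)) ?_,
      ?_, ?_⟩, ?_⟩
  · -- forward respects the relation
    rintro a b ⟨z, hz, e⟩
    apply Quotient.sound
    set h := (fwdspec a).choose with hh
    set h' := (fwdspec b).choose with hh'
    have ea : (a : G) = h⁻¹ * σG h := (fwdspec a).choose_spec
    have eb : (b : G) = h'⁻¹ * σG h' := (fwdspec b).choose_spec
    have e2 : (h * z⁻¹)⁻¹ * σG (h * z⁻¹) = (b : G) := by
      rw [e, ea]; simp only [map_mul, map_inv]; group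
    refine ⟨h' * (h * z⁻¹)⁻¹, sigma_fix_aux σG h' (h * z⁻¹) (b : G) eb.symm e2, ?_⟩
    show (h' * (h * z⁻¹)⁻¹) • (h • x₀) = h' • x₀
    have hzx : z • x₀ = x₀ := hz
    rw [← mul_smul]
    have : h' * (h * z⁻¹)⁻¹ * h = h' * z := by group
    rw [this, mul_smul, hzx]
  · -- backward respects the relation
    rintro y y' ⟨k, hk, e⟩
    apply Quotient.sound
    have hg : y.2.1.choose • x₀ = (y : X) := y.2.1.choose_spec
    have hg' : y'.2.1.choose • x₀ = (y' : X) := y'.2.1.choose_spec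
    have he : y'.2.1.choose • x₀ = (k * y.2.1.choose) • x₀ := by
      rw [mul_smul, hg, e]; exact hg'
    exact rel_aux σG x₀ _ _ k hk he
  · -- left inverse
    refine fun q => Quotient.inductionOn q (fun a => ?_)
    simp only [Quotient.lift_mk]
    apply Quotient.sound
    have hg : (f a).2.1.choose • x₀ = ((f a) : X) := (f a).2.1.choose_spec
    have he : (fwdspec a).choose • x₀ = (1 * (f a).2.1.choose) • x₀ := by
      rw [one_mul, hg, hf1]
    obtain ⟨z, hz, hrel⟩ := rel_aux σG x₀ (f a).2.1.choose (fwdspec a).choose 1 (map_one σG) he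
    refine ⟨z, hz, ?_⟩
    rw [← (fwdspec a).choose_spec] at hrel
    rw [hfinv1]
    exact hrel
  · -- right inverse
    refine fun q => Quotient.inductionOn q (fun y => ?_)
    show Quotient.mk (fixedOrbitSetoid σG σX x₀) (f (finv y)) = Quotient.mk (fixedOrbitSetoid σG σX x₀) y
    apply Quotient.sound
    have hg : y.2.1.choose • x₀ = (y : X) := y.2.1.choose_spec
    have ea : ((finv y) : G) = (fwdspec (finv y)).choose⁻¹ * σG (fwdspec (finv y)).choose :=
      (fwdspec (finv y)).choose_spec
    refine ⟨y.2.1.choose * ((fwdspec (finv y)).choose)⁻¹,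
      sigma_fix_aux σG _ _ ((finv y) : G) (hfinv1 y).symm ea.symm, ?_⟩
    show (y.2.1.choose * ((fwdspec (finv y)).choose)⁻¹) • ((f (finv y)) : X) = (y : X)
    rw [hf1, ← mul_smul,
      show y.2.1.choose * ((fwdspec (finv y)).choose)⁻¹ * (fwdspec (finv y)).choose
        = y.2.1.choose from by group]
    exact hg
  · -- the specification
    intro a g hga y hy
    simp only [Equiv.coe_fn_mk, relH1.mk, Quotient.lift_mk]
    apply Quotient.sound
    have ea : (a : G) = (fwdspec a).choose⁻¹ * σG (fwdspec a).choose := (fwdspec a).choose_spec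
    refine ⟨g * ((fwdspec a).choose)⁻¹,
      sigma_fix_aux σG _ _ (a : G) hga ea.symm, ?_⟩
    show (g * ((fwdspec a).choose)⁻¹) • ((f a) : X) = (y : X)
    rw [hf1, ← mul_smul, hy]
    congr 1
    group
end

section
/- In the exterior algebra of ℝ⁸ with standard basis e₁,…,e₈, set e_{ijkl} = eᵢ∧eⱼ∧e_k∧e_l. Let Φ₅ = e₁₂₃₄ − e₁₂₅₆ + e₁₂₇₈ + e₁₃₅₇ + e₁₃₆₈ − e₁₄₅₈ + e₁₄₆₇ + e₂₃₅₈ − e₂₃₆₇ + e₂₄₅₇ + e₂₄₆₈ + e₃₄₅₆ − e₃₄₇₈ + e₅₆₇₈, and let Φ = −e₁₂₅₆ + e₁₃₅₇ + e₁₄₅₈ + e₂₃₆₇ + e₂₄₆₈ − e₃₄₇₈ + e₁₂₃₄ − e₁₂₇₈ − e₁₃₆₈ + e₁₄₆₇ + e₂₃₅₈ − e₂₄₅₇ − e₃₄₅₆ + e₅₆₇₈ (this is Φ₁₁ with parameter b = 1). Let g = diag(−1,−1,−1,1,−1,1,1,1), acting on ℝ⁸, and let Λg be the induced algebra endomorphism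 of the exterior algebra (so Λg(u₁∧u₂∧u₃∧u₄) = (gu₁)∧(gu₂)∧(gu₃)∧(gu₄)). Then Λg(Φ) = −Φ₅. -/
open ExteriorAlgebra

/-- The image in the exterior algebra of the `i`-th standard basis vector of `ℝ⁸`
(`i` is 0-based, so `e 0` is the paper's `e₁`, ..., `e 7` is `e₈`). -/
noncomputable def e (i : Fin 8) : ExteriorAlgebra ℝ (Fin 8 → ℝ) :=
  ι ℝ (Pi.single i 1)

/-- `E i j k l = eᵢ ∧ eⱼ ∧ e_k ∧ e_l` (0-based indices). -/
noncomputable def E (i j k l : Fin 8) : ExteriorAlgebra ℝ (Fin 8 → ℝ) :=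
  e i * e j * e k * e l

/-- The Spin(7)-form `Φ₅` (0-based indices). -/
noncomputable def Phi5 : ExteriorAlgebra ℝ (Fin 8 → ℝ) :=
  E 0 1 2 3 - E 0 1 4 5 + E 0 1 6 7 + E 0 2 4 6 + E 0 2 5 7 - E 0 3 4 7 + E 0 3 5 6 +
    E 1 2 4 7 - E 1 2 5 6 + E 1 3 4 6 + E 1 3 5 7 + E 2 3 4 5 - E 2 3 6 7 + E 4 5 6 7

/-- The form `Φ = Φ₁₁` with parameter `b = 1` (0-based indices). -/
noncomputable def Phi : ExteriorAlgebra ℝ (Fin 8 → ℝ) :=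
  -E 0 1 4 5 + E 0 2 4 6 + E 0 3 4 7 + E 1 2 5 6 + E 1 3 5 7 - E 2 3 6 7 +
    E 0 1 2 3 - E 0 1 6 7 - E 0 2 5 7 + E 0 3 5 6 + E 1 2 4 7 - E 1 3 4 6 -
    E 2 3 4 5 + E 4 5 6 7

theorem map_e (i : Fin 8) (d : Fin 8 → ℝ) :
    ExteriorAlgebra.map (Matrix.toLin' (Matrix.diagonal d)) (e i) = d i • e i := by
  simp only [e, ExteriorAlgebra.map_apply_ι, ← LinearMap.map_smul]
  congr 1
  simp [Matrix.toLin'_apply, Matrix.mulVec_single, Matrix.diagonal_apply]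
  ext j
  by_cases h : j = i <;> simp [h, Pi.single_apply]

theorem map_E (i j k l : Fin 8) (d : Fin 8 → ℝ) :
    ExteriorAlgebra.map (Matrix.toLin' (Matrix.diagonal d)) (E i j k l)
      = (d i * d j * d k * d l) • E i j k l := by
  simp only [E, map_mul, map_e, smul_mul_assoc, mul_smul_comm, smul_smul]
  ring_nf

/-- For `g = diag(−1,−1,−1,1,−1,1,1,1)`, the induced algebra endomorphism `Λg` of the
exterior algebra of `ℝ⁸` maps `Φ` to `−Φ₅`. -/
theorem statement19 :
    ExteriorAlgebra.map
        (Matrix.toLin' (Matrix.diagonal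
          (![-1, -1, -1, 1, -1, 1, 1, 1] : Fin 8 → ℝ))) Phi = -Phi5 := by
  simp only [Phi, Phi5, map_add, map_sub, map_neg, map_E]
  have h0 : (![-1, -1, -1, 1, -1, 1, 1, 1] : Fin 8 → ℝ) 0 = -1 := rfl
  have h1 : (![-1, -1, -1, 1, -1, 1, 1, 1] : Fin 8 → ℝ) 1 = -1 := rfl
  have h2 : (![-1, -1, -1, 1, -1, 1, 1, 1] : Fin 8 → ℝ) 2 = -1 := rfl
  have h3 : (![-1, -1, -1, 1, -1, 1, 1, 1] : Fin 8 → ℝ) 3 = 1 := rfl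
  have h4 : (![-1, -1, -1, 1, -1, 1, 1, 1] : Fin 8 → ℝ) 4 = -1 := rfl
  have h5 : (![-1, -1, -1, 1, -1, 1, 1, 1] : Fin 8 → ℝ) 5 = 1 := rfl
  have h6 : (![-1, -1, -1, 1, -1, 1, 1, 1] : Fin 8 → ℝ) 6 = 1 := rfl
  have h7 : (![-1, -1, -1, 1, -1, 1, 1, 1] : Fin 8 → ℝ) 7 = 1 := rfl
  simp only [h0, h1, h2, h3, h4, h5, h6, h7]
  norm_num
  abel
end
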